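/- Let (M^{2n+1}, φ, ξ, η, g) be an almost α-Kenmotsu manifold such that the integral manifolds of the distribution D = ker η are Kähler manifolds. Then M^{2n+1} is an α-Kenmotsu manifold if and only if h' = 0, equivalently ∇ξ = −α φ², where ∇ is the Levi-Civita connection. In particular, a 3-dimensional almost α-Kenmotsu manifold with h' = 0 is an α-Kenmotsu manifold. -/

import Mathlib

/- Common framework: a (2n+1)-dimensional manifold is modelled by an open subset `s`
of Euclidean space; tensor fields are given pointwise (evaluated on constant vector
fields), connections are given by their Christoffel symbols, and covariant
derivatives / curvatures are expressed via `fderiv`. -/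

noncomputable section

namespace AKG

open scoped RealInnerProductSpace

abbrev E (m : ℕ) : Type := EuclideanSpace ℝ (Fin m)

variable {V : Type*} [NormedAddCommGroup V] [NormedSpace ℝ V]

/-- A Riemannian metric on `s`, as a pointwise symmetric positive bilinear form. -/
def IsMetricOn (s : Set V) (g : V → V → V → ℝ) : Prop :=
  (∀ u v : V, ContDiffOn ℝ (⊤ : ℕ∞) (fun p => g p u v) s) ∧
  (∀ p ∈ s, ∀ u v : V, g p u v = g p v u) ∧
  (∀ p ∈ s, ∀ v : V, IsLinearMap ℝ (fun u : V => g p u v)) ∧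
  (∀ p ∈ s, ∀ u : V, u ≠ 0 → 0 < g p u u)

/-- A linear connection on `s`, via its Christoffel symbols. -/
def IsConnectionOn (s : Set V) (Γ : V → V → V → V) : Prop :=
  (∀ u v : V, ContDiffOn ℝ (⊤ : ℕ∞) (fun p => Γ p u v) s) ∧
  (∀ p ∈ s, ∀ v : V, IsLinearMap ℝ (fun u : V => Γ p u v)) ∧
  (∀ p ∈ s, ∀ u : V, IsLinearMap ℝ (fun v : V => Γ p u v))

/-- The Levi-Civita connection of `g` on `s`: torsion-free and metric. -/
def IsLeviCivitaOn (s : Set V) (g : V → V → V → ℝ) (Γ : V → V → V → V) : Prop :=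
  IsConnectionOn s Γ ∧
  (∀ p ∈ s, ∀ u v : V, Γ p u v = Γ p v u) ∧
  (∀ p ∈ s, ∀ u v w : V,
    fderiv ℝ (fun q => g q v w) p u = g p (Γ p u v) w + g p v (Γ p u w))

/-- Covariant derivative `∇ᵤ X` of a vector field `X` at `p`. -/
def cov (Γ : V → V → V → V) (X : V → V) (p u : V) : V :=
  fderiv ℝ X p u + Γ p u (X p)

/-- Curvature tensor `R(u,v)w` at `p` (evaluated on constant extensions). -/
def Rm (Γ : V → V → V → V) (p u v w : V) : V :=
  fderiv ℝ (fun q => Γ q v w) p u - fderiv ℝ (fun q => Γ q u w) p v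
    + Γ p u (Γ p v w) - Γ p v (Γ p u w)

/-- Covariant derivative `(∇ᵤ A)(v)` of a (1,1)-tensor field `A`. -/
def covOp (Γ : V → V → V → V) (A : V → V → V) (p u v : V) : V :=
  fderiv ℝ (fun q => A q v) p u + Γ p u (A p v) - A p (Γ p u v)

/-- Covariant derivative of a (1,2)-tensor field. -/
def covT2 (Γ : V → V → V → V) (A : V → V → V → V) (p x u v : V) : V :=
  fderiv ℝ (fun q => A q u v) p x + Γ p x (A p u v)
    - A p (Γ p x u) v - A p u (Γ p x v)

/-- Covariant derivative of a (1,3)-tensor field. -/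
def covT3 (Γ : V → V → V → V) (B : V → V → V → V → V) (p x u v w : V) : V :=
  fderiv ℝ (fun q => B q u v w) p x + Γ p x (B p u v w)
    - B p (Γ p x u) v w - B p u (Γ p x v) w - B p u v (Γ p x w)

/-- Local symmetry: `∇R = 0`. -/
def LocallySymmetricOn (s : Set V) (Γ : V → V → V → V) : Prop :=
  ∀ p ∈ s, ∀ x u v w : V, covT3 Γ (Rm Γ) p x u v w = 0

/-- Constant sectional curvature `k`. -/
def ConstCurvOn (s : Set V) (g : V → V → V → ℝ) (Γ : V → V → V → V) (k : ℝ) : Prop :=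
  ∀ p ∈ s, ∀ u v w : V, Rm Γ p u v w = k • (g p v w • u - g p u w • v)

def HasConstCurv (s : Set V) (g : V → V → V → ℝ) (k : ℝ) : Prop :=
  ∃ Γ : V → V → V → V, IsLeviCivitaOn s g Γ ∧ ConstCurvOn s g Γ k

/-- Torsion of a connection (with the factor 1/2 normalization of the paper). -/
def torsion (Γ : V → V → V → V) (p u v : V) : V := (2 : ℝ)⁻¹ • (Γ p u v - Γ p v u)

/-- An almost contact metric structure on `s`. -/
structure ACM (s : Set V) where
  phi : V → V → V
  xi : V → V
  eta : V → V → ℝ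
  g : V → V → V → ℝ
  smooth_phi : ∀ u : V, ContDiffOn ℝ (⊤ : ℕ∞) (fun p => phi p u) s
  smooth_xi : ContDiffOn ℝ (⊤ : ℕ∞) xi s
  smooth_eta : ∀ u : V, ContDiffOn ℝ (⊤ : ℕ∞) (fun p => eta p u) s
  lin_phi : ∀ p ∈ s, IsLinearMap ℝ (phi p)
  lin_eta : ∀ p ∈ s, IsLinearMap ℝ (eta p)
  metric : IsMetricOn s g
  phi_sq : ∀ p ∈ s, ∀ u : V, phi p (phi p u) = -u + eta p u • xi p
  eta_xi : ∀ p ∈ s, eta p (xi p) = 1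
  compat : ∀ p ∈ s, ∀ u v : V, g p (phi p u) (phi p v) = g p u v - eta p u * eta p v

/-- Fundamental 2-form `Φ(u,v) = g(u, φ v)`. -/
def FPhi {s : Set V} (S : ACM s) (p u v : V) : ℝ := S.g p u (S.phi p v)

/-- Lie derivative `(L_ξ φ)(u)` at `p` (constant extension of `u`). -/
def lieXiPhi (phi : V → V → V) (xi : V → V) (p u : V) : V :=
  fderiv ℝ (fun q => phi q u) p (xi p) - fderiv ℝ xi p (phi p u)
    + phi p (fderiv ℝ xi p u)

/-- The operator `h' = (1/(2α)) (L_ξ φ) ∘ φ`. -/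
def hpr (α : ℝ) (phi : V → V → V) (xi : V → V) (p u : V) : V :=
  (1 / (2 * α)) • lieXiPhi phi xi p (phi p u)

/-- `dη(u,v)` (constant extensions). -/
def dEta (eta : V → V → ℝ) (p u v : V) : ℝ :=
  fderiv ℝ (fun q => eta q v) p u - fderiv ℝ (fun q => eta q u) p v

/-- `S` is an almost α-Kenmotsu structure on `s` : `dη = 0` and `dΦ = 2α η ∧ Φ`. -/
structure IsAK (s : Set V) (S : ACM s) (α : ℝ) : Prop where
  pos : 0 < α
  deta : ∀ p ∈ s, ∀ u v : V, dEta S.eta p u v = 0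
  dphi : ∀ p ∈ s, ∀ u v w : V,
    fderiv ℝ (fun q => FPhi S q v w) p u - fderiv ℝ (fun q => FPhi S q u w) p v
      + fderiv ℝ (fun q => FPhi S q u v) p w
    = 2 * α * (S.eta p u * FPhi S p v w - S.eta p v * FPhi S p u w
        + S.eta p w * FPhi S p u v)

/-- Nijenhuis torsion `[φ,φ](u,v)` at `p` (constant extensions). -/
def nijPhi (phi : V → V → V) (p u v : V) : V :=
  fderiv ℝ (fun q => phi q v) p (phi p u) - fderiv ℝ (fun q => phi q u) p (phi p v)
    + phi p (fderiv ℝ (fun q => phi q u) p v) - phi p (fderiv ℝ (fun q => phi q v) p u)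

/-- Normality: `N = [φ,φ] + 2 dη ⊗ ξ = 0`. -/
def IsNormal (s : Set V) (S : ACM s) : Prop :=
  ∀ p ∈ s, ∀ u v : V, nijPhi S.phi p u v + (2 * dEta S.eta p u v) • S.xi p = 0

/-- CR-integrability: the Nijenhuis torsion of φ vanishes on `D = ker η`
(equivalently the integral manifolds of `D` are Kähler). -/
def CRIntegrableOn (s : Set V) (S : ACM s) : Prop :=
  ∀ p ∈ s, ∀ u v : V, S.eta p u = 0 → S.eta p v = 0 → nijPhi S.phi p u v = 0

/-- `ξ` belongs to the (κ,μ)'-nullity distribution. -/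
def KMuNullity (s : Set V) (S : ACM s) (α κ μ : ℝ) (Γ : V → V → V → V) : Prop :=
  ∀ p ∈ s, ∀ u v : V,
    Rm Γ p u v (S.xi p)
      = κ • (S.eta p v • u - S.eta p u • v)
        + μ • (S.eta p v • hpr α S.phi S.xi p u - S.eta p u • hpr α S.phi S.xi p v)

/-- `h'` is η-parallel. -/
def EtaParallelH (s : Set V) (S : ACM s) (α : ℝ) (Γ : V → V → V → V) : Prop :=
  ∀ p ∈ s, ∀ u v w : V, S.eta p u = 0 → S.eta p v = 0 → S.eta p w = 0 →
    S.g p (covOp Γ (hpr α S.phi S.xi) p u v) w = 0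

/-- `∇_ξ h' = 0`. -/
def XiParallelH (s : Set V) (S : ACM s) (α : ℝ) (Γ : V → V → V → V) : Prop :=
  ∀ p ∈ s, ∀ v : V, covOp Γ (hpr α S.phi S.xi) p (S.xi p) v = 0

/-- The canonical connection `∇̃_X Y = ∇_X Y + α g(X + h'X, Y)ξ − α η(Y)(X + h'X)`. -/
def canonical {s : Set V} (α : ℝ) (S : ACM s) (Γ : V → V → V → V) : V → V → V → V :=
  fun p u v =>
    Γ p u v + (α * S.g p (u + hpr α S.phi S.xi p u) v) • S.xi p
      - (α * S.eta p v) • (u + hpr α S.phi S.xi p u)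

def ParallelTorsion (s : Set V) (Γ : V → V → V → V) : Prop :=
  ∀ p ∈ s, ∀ x u v : V, covT2 Γ (torsion Γ) p x u v = 0

def ParallelCurv (s : Set V) (Γ : V → V → V → V) : Prop :=
  ∀ p ∈ s, ∀ x u v w : V, covT3 Γ (Rm Γ) p x u v w = 0

def FlatCurv (s : Set V) (Γ : V → V → V → V) : Prop :=
  ∀ p ∈ s, ∀ u v w : V, Rm Γ p u v w = 0

def HasEigen (h : V → V) (c : ℝ) : Prop := ∃ u : V, u ≠ 0 ∧ h u = c • u

/-- Multiplicity of the eigenvalue `c` of a (pointwise linear) operator. -/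
def eigMult (h : V → V) (c : ℝ) : ℕ :=
  Module.finrank ℝ ↥(Submodule.span ℝ {u : V | h u = c • u})

/-- `0` is a simple eigenvalue of `h'`: its kernel is spanned by `ξ`. -/
def KernelIsXiLine (xi₀ : V) (h : V → V) : Prop :=
  ∀ u : V, h u = 0 → ∃ a : ℝ, u = a • xi₀

def hprNonzero (s : Set V) (S : ACM s) (α : ℝ) : Prop :=
  ∃ p ∈ s, ∃ u : V, hpr α S.phi S.xi p u ≠ 0

/-- `S'` is the D-homothetic deformation of `S` with constant `β`. -/
def IsDHom (s : Set V) (S S' : ACM s) (β : ℝ) : Prop :=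
  ∀ p ∈ s,
    (∀ u : V, S'.phi p u = S.phi p u) ∧ S'.xi p = β⁻¹ • S.xi p ∧
    (∀ u : V, S'.eta p u = β * S.eta p u) ∧
    (∀ u v : V, S'.g p u v = β * S.g p u v + β * (β - 1) * (S.eta p u * S.eta p v))

/-- Local equivalence of almost contact metric structures. -/
def LocallyEquivalent (s : Set V) (S : ACM s) (s' : Set V) (S' : ACM s') : Prop :=
  ∀ p ∈ s, ∀ q ∈ s', ∃ (U U' : Set V) (f finv : V → V),
    p ∈ U ∧ IsOpen U ∧ U ⊆ s ∧ q ∈ U' ∧ IsOpen U' ∧ U' ⊆ s' ∧ f p = q ∧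
    ContDiffOn ℝ (⊤ : ℕ∞) f U ∧ Set.BijOn f U U' ∧
    ContDiffOn ℝ (⊤ : ℕ∞) finv U' ∧ (∀ x ∈ U, finv (f x) = x) ∧
    ∀ x ∈ U,
      fderiv ℝ f x (S.xi x) = S'.xi (f x) ∧
      (∀ u : V, fderiv ℝ f x (S.phi x u) = S'.phi (f x) (fderiv ℝ f x u)) ∧
      (∀ u : V, S'.eta (f x) (fderiv ℝ f x u) = S.eta x u) ∧
      (∀ u v : V, S'.g (f x) (fderiv ℝ f x u) (fderiv ℝ f x v) = S.g x u v)

/-- Local equivalence up to a D-homothetic deformation. -/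
def EquivUpToDHom (s : Set V) (S : ACM s) (s' : Set V) (S' : ACM s') : Prop :=
  ∃ β : ℝ, 0 < β ∧ ∃ S₁ : ACM s, IsDHom s S S₁ β ∧ LocallyEquivalent s S₁ s' S'

/-- Involutivity (integrability) of a distribution. -/
def IsInvolutive (s : Set V) (D : V → Set V) : Prop :=
  ∀ X Y : V → V, (∀ p ∈ s, DifferentiableAt ℝ X p) → (∀ p ∈ s, DifferentiableAt ℝ Y p) →
    (∀ p ∈ s, X p ∈ D p) → (∀ p ∈ s, Y p ∈ D p) →
    ∀ p ∈ s, fderiv ℝ Y p (X p) - fderiv ℝ X p (Y p) ∈ D p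

/-- The leaves of the distribution `D` are totally geodesic. -/
def TotallyGeodesicDist (s : Set V) (D : V → Set V) (Γ : V → V → V → V) : Prop :=
  ∀ X Y : V → V, (∀ p ∈ s, DifferentiableAt ℝ X p) → (∀ p ∈ s, DifferentiableAt ℝ Y p) →
    (∀ p ∈ s, X p ∈ D p) → (∀ p ∈ s, Y p ∈ D p) →
    ∀ p ∈ s, cov Γ Y p (X p) ∈ D p

/-- The leaves of the distribution `D` are totally umbilical. -/
def TotallyUmbilicalDist (s : Set V) (D : V → Set V) (g : V → V → V → ℝ)
    (Γ : V → V → V → V) : Prop :=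
  ∃ H : V → V, (∀ p ∈ s, ∀ w ∈ D p, g p (H p) w = 0) ∧
    ∀ X Y : V → V, (∀ p ∈ s, DifferentiableAt ℝ X p) → (∀ p ∈ s, DifferentiableAt ℝ Y p) →
      (∀ p ∈ s, X p ∈ D p) → (∀ p ∈ s, Y p ∈ D p) →
      ∀ p ∈ s, cov Γ Y p (X p) - g p (X p) (Y p) • H p ∈ D p

/-- The eigendistribution `[λ]` of `h'`. -/
def eigDist {s : Set V} (α : ℝ) (S : ACM s) (lam : ℝ) : V → Set V :=
  fun p => {u : V | hpr α S.phi S.xi p u = lam • u ∧ S.eta p u = 0}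

/-- The distribution `[ξ] ⊕ [λ]`. -/
def xiPlusEigDist {s : Set V} (α : ℝ) (S : ACM s) (lam : ℝ) : V → Set V :=
  fun p => {u : V | hpr α S.phi S.xi p u = lam • (u - S.eta p u • S.xi p)}

/-- An almost Hermitian structure on an open set of `E m`. -/
structure AHerm (m : ℕ) (W : Set (E m)) where
  J : E m → E m → E m
  h : E m → E m → E m → ℝ
  smooth_J : ∀ u : E m, ContDiffOn ℝ (⊤ : ℕ∞) (fun p => J p u) W
  lin_J : ∀ p ∈ W, IsLinearMap ℝ (J p)
  metric : IsMetricOn W h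
  J_sq : ∀ p ∈ W, ∀ u : E m, J p (J p u) = -u
  compat : ∀ p ∈ W, ∀ u v : E m, h p (J p u) (J p v) = h p u v

/-- The Kähler form of an almost Hermitian structure. -/
def Kform {m : ℕ} {W : Set (E m)} (K : AHerm m W) (p u v : E m) : ℝ := K.h p u (K.J p v)

/-- Almost Kähler: the Kähler form is closed. -/
def IsAlmostKaehler {m : ℕ} {W : Set (E m)} (K : AHerm m W) : Prop :=
  ∀ p ∈ W, ∀ u v w : E m,
    fderiv ℝ (fun q => Kform K q v w) p u - fderiv ℝ (fun q => Kform K q u w) p v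
      + fderiv ℝ (fun q => Kform K q u v) p w = 0

/-- Kähler: almost Kähler with integrable `J`. -/
def IsKaehler {m : ℕ} {W : Set (E m)} (K : AHerm m W) : Prop :=
  IsAlmostKaehler K ∧ ∀ p ∈ W, ∀ u v : E m, nijPhi K.J p u v = 0

/-- `M` is locally a warped product `M' ×_f N` of an open interval and an almost
Kähler manifold, with warping function `f = c e^{α t}`. -/
def LocWarpedIntervalAK (n : ℕ) (s : Set (E (2*n+1))) (S : ACM s) (α : ℝ) : Prop :=
  ∀ p ∈ s, ∃ (U : Set (E (2*n+1))) (I : Set ℝ) (W : Set (E (2*n)))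
    (K : AHerm (2*n) W) (c : ℝ) (ψ : E (2*n+1) → ℝ × E (2*n))
    (χ : ℝ × E (2*n) → E (2*n+1)),
    p ∈ U ∧ IsOpen U ∧ U ⊆ s ∧ IsOpen I ∧ I.OrdConnected ∧ IsOpen W ∧
    IsAlmostKaehler K ∧ 0 < c ∧
    ContDiffOn ℝ (⊤ : ℕ∞) ψ U ∧ Set.BijOn ψ U (I ×ˢ W) ∧
    ContDiffOn ℝ (⊤ : ℕ∞) χ (I ×ˢ W) ∧ (∀ x ∈ U, χ (ψ x) = x) ∧
    ∀ q ∈ U, ∀ u v : E (2*n+1),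
      S.g q u v = (fderiv ℝ ψ q u).1 * (fderiv ℝ ψ q v).1
        + (c * Real.exp (α * (ψ q).1))^2
          * K.h (ψ q).2 (fderiv ℝ ψ q u).2 (fderiv ℝ ψ q v).2

/-- Local isometry with a Riemannian product of constant curvature manifolds. -/
def LocIsomProd (m n₁ n₂ : ℕ) (s : Set (E m)) (g : E m → E m → E m → ℝ)
    (k₁ k₂ : ℝ) : Prop :=
  ∀ p ∈ s, ∃ (U : Set (E m)) (W₁ : Set (E n₁)) (W₂ : Set (E n₂))
    (g₁ : E n₁ → E n₁ → E n₁ → ℝ) (g₂ : E n₂ → E n₂ → E n₂ → ℝ)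
    (ψ : E m → E n₁ × E n₂) (χ : E n₁ × E n₂ → E m),
    p ∈ U ∧ IsOpen U ∧ U ⊆ s ∧ IsOpen W₁ ∧ IsOpen W₂ ∧
    IsMetricOn W₁ g₁ ∧ IsMetricOn W₂ g₂ ∧
    HasConstCurv W₁ g₁ k₁ ∧ HasConstCurv W₂ g₂ k₂ ∧
    ContDiffOn ℝ (⊤ : ℕ∞) ψ U ∧ Set.BijOn ψ U (W₁ ×ˢ W₂) ∧
    ContDiffOn ℝ (⊤ : ℕ∞) χ (W₁ ×ˢ W₂) ∧ (∀ x ∈ U, χ (ψ x) = x) ∧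
    ∀ q ∈ U, ∀ u v : E m,
      g q u v = g₁ (ψ q).1 (fderiv ℝ ψ q u).1 (fderiv ℝ ψ q v).1
        + g₂ (ψ q).2 (fderiv ℝ ψ q u).2 (fderiv ℝ ψ q v).2

/-- The axioms characterizing the canonical connection of a CR-integrable
almost α-Kenmotsu structure: `φ`, `g`, `η` parallel, together with the
torsion conditions a), b), c). -/
def IsCanonicalFor (s : Set V) (S : ACM s) (α : ℝ) (Γt : V → V → V → V) : Prop :=
  IsConnectionOn s Γt ∧
  (∀ p ∈ s, ∀ u v : V, covOp Γt S.phi p u v = 0) ∧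
  (∀ p ∈ s, ∀ u v w : V,
    fderiv ℝ (fun q => S.g q v w) p u = S.g p (Γt p u v) w + S.g p v (Γt p u w)) ∧
  (∀ p ∈ s, ∀ u v : V, fderiv ℝ (fun q => S.eta q v) p u = S.eta p (Γt p u v)) ∧
  (∀ p ∈ s, ∀ u v : V, S.eta p u = 0 → S.eta p v = 0 → torsion Γt p u v = 0) ∧
  (∀ p ∈ s, ∀ u : V, S.eta p u = 0 →
    (2 : ℝ) • torsion Γt p (S.xi p) u = α • (u + hpr α S.phi S.xi p u)) ∧
  (∀ p ∈ s, ∀ u v : V, S.g p (torsion Γt p (S.xi p) u) v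
    = S.g p u (torsion Γt p (S.xi p) v))


/-
Since `dη = 0`, normality means `[φ,φ] = 0`. Differentiating the structure identities gives
`N(u, ξ) = φ((L_ξ φ) u) = -2α h'u`, so `h' = 0` says exactly that `N(·, ξ) = 0`, while the
Kähler leaves give `N = 0` on `ker η`; by bilinearity `N = 0`. The Koszul formula, combined
with `dη = 0` and `dΦ = 2α η ∧ Φ`, yields `∇ξ = -αφ² + αh'`, which gives the second
equivalence. In dimension three `ker η` is spanned by `a` and `φa` for any nonzero
`a ∈ ker η`, and `N(φa, a)` is a multiple of `ξ` annihilated by `η`, so the leaves are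
automatically Kähler.
-/

section LinearField

variable {D F W : Type*} [NormedAddCommGroup D] [NormedSpace ℝ D]
  [NormedAddCommGroup F] [NormedSpace ℝ F] [NormedAddCommGroup W] [NormedSpace ℝ W]

structure IsC1LinearFieldOn (s : Set D) (A : D → F → W) : Prop where
  contDiffOn : ∀ a, ContDiffOn ℝ 1 (fun q => A q a) s
  isLinearMap : ∀ q ∈ s, IsLinearMap ℝ (A q)

lemma IsC1LinearFieldOn.differentiableAt_apply {s : Set D} {A : D → F → W}
    (hA : IsC1LinearFieldOn s A) (hs : IsOpen s) {p : D} (hp : p ∈ s) (a : F) :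
    DifferentiableAt ℝ (fun q => A q a) p :=
  ((hA.contDiffOn a).differentiableOn one_ne_zero).differentiableAt (hs.mem_nhds hp)

end LinearField

section LinearFieldFiniteDimensional

open Filter Topology

variable {D F W : Type*} [NormedAddCommGroup F] [NormedSpace ℝ F] [FiniteDimensional ℝ F]
  [NormedAddCommGroup W] [NormedSpace ℝ W]

open Classical in
/-- Junk value `0` wherever `A q` is not linear. -/
def toCLMField (A : D → F → W) (q : D) : F →L[ℝ] W :=
  if h : IsLinearMap ℝ (A q) then LinearMap.toContinuousLinearMap (IsLinearMap.mk' _ h) else 0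

lemma toCLMField_apply {A : D → F → W} {q : D} (h : IsLinearMap ℝ (A q)) (a : F) :
    toCLMField A q a = A q a := by
  simp [toCLMField, h]

namespace IsC1LinearFieldOn

variable [NormedAddCommGroup D] [NormedSpace ℝ D] {s : Set D} {A : D → F → W} {p : D}

lemma differentiableAt_toCLMField (hA : IsC1LinearFieldOn s A) (hs : IsOpen s) (hp : p ∈ s) :
    DifferentiableAt ℝ (toCLMField A) p := by
  have h : ContDiffOn ℝ 1 (toCLMField A) s := contDiffOn_clm_apply.2 fun a =>
    (hA.contDiffOn a).congr fun q hq => toCLMField_apply (hA.isLinearMap q hq) a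
  exact (h.differentiableOn one_ne_zero).differentiableAt (hs.mem_nhds hp)

lemma toCLMField_eventuallyEq (hA : IsC1LinearFieldOn s A) (hs : IsOpen s) (hp : p ∈ s)
    (X : D → F) : (fun q => toCLMField A q (X q)) =ᶠ[𝓝 p] fun q => A q (X q) := by
  filter_upwards [hs.mem_nhds hp] with q hq using toCLMField_apply (hA.isLinearMap q hq) _

lemma fderiv_apply_eq_flip (hA : IsC1LinearFieldOn s A) (hs : IsOpen s) (hp : p ∈ s) (a : F) :
    fderiv ℝ (fun q => A q a) p = (fderiv ℝ (toCLMField A) p).flip a := by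
  rw [← (hA.toCLMField_eventuallyEq hs hp fun _ => a).fderiv_eq,
    fderiv_clm_apply (hA.differentiableAt_toCLMField hs hp) (differentiableAt_const a)]
  simp

lemma fderiv_apply (hA : IsC1LinearFieldOn s A) (hs : IsOpen s) (hp : p ∈ s) {X : D → F}
    (hX : DifferentiableAt ℝ X p) (x : D) :
    fderiv ℝ (fun q => A q (X q)) p x
      = fderiv ℝ (fun q => A q (X p)) p x + A p (fderiv ℝ X p x) := by
  rw [← (hA.toCLMField_eventuallyEq hs hp X).fderiv_eq,
    fderiv_clm_apply (hA.differentiableAt_toCLMField hs hp) hX, hA.fderiv_apply_eq_flip hs hp,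
    ← toCLMField_apply (hA.isLinearMap p hp)]
  simp [add_comm]

lemma fderiv_apply_add (hA : IsC1LinearFieldOn s A) (hs : IsOpen s) (hp : p ∈ s) (a b : F) :
    fderiv ℝ (fun q => A q (a + b)) p
      = fderiv ℝ (fun q => A q a) p + fderiv ℝ (fun q => A q b) p := by
  simp only [hA.fderiv_apply_eq_flip hs hp, map_add]

lemma fderiv_apply_smul (hA : IsC1LinearFieldOn s A) (hs : IsOpen s) (hp : p ∈ s) (c : ℝ)
    (a : F) : fderiv ℝ (fun q => A q (c • a)) p = c • fderiv ℝ (fun q => A q a) p := by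
  simp only [hA.fderiv_apply_eq_flip hs hp, map_smul]

lemma fderiv_apply_eq_neg_of_eventuallyConst (hA : IsC1LinearFieldOn s A) (hs : IsOpen s)
    (hp : p ∈ s) {X : D → F} (hX : DifferentiableAt ℝ X p) {c : W}
    (hc : (fun q => A q (X q)) =ᶠ[𝓝 p] fun _ => c) (x : D) :
    fderiv ℝ (fun q => A q (X p)) p x = -A p (fderiv ℝ X p x) := by
  have h := hA.fderiv_apply hs hp hX x
  rw [hc.fderiv_eq, fderiv_const_apply, zero_apply] at h
  exact eq_neg_of_add_eq_zero_left h.symm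

end IsC1LinearFieldOn

end LinearFieldFiniteDimensional

namespace ACM

variable {s : Set V} (S : ACM s) {p : V}

lemma eta_add (hp : p ∈ s) (u v : V) : S.eta p (u + v) = S.eta p u + S.eta p v :=
  (S.lin_eta p hp).map_add u v

lemma eta_smul (hp : p ∈ s) (c : ℝ) (u : V) : S.eta p (c • u) = c * S.eta p u :=
  (S.lin_eta p hp).map_smul c u

lemma eta_sub (hp : p ∈ s) (u v : V) : S.eta p (u - v) = S.eta p u - S.eta p v :=
  (S.lin_eta p hp).map_sub u v

lemma eta_neg (hp : p ∈ s) (u : V) : S.eta p (-u) = -S.eta p u := (S.lin_eta p hp).map_neg u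

lemma eta_zero (hp : p ∈ s) : S.eta p 0 = 0 := (S.lin_eta p hp).map_zero

lemma phi_add (hp : p ∈ s) (u v : V) : S.phi p (u + v) = S.phi p u + S.phi p v :=
  (S.lin_phi p hp).map_add u v

lemma phi_smul (hp : p ∈ s) (c : ℝ) (u : V) : S.phi p (c • u) = c • S.phi p u :=
  (S.lin_phi p hp).map_smul c u

lemma phi_sub (hp : p ∈ s) (u v : V) : S.phi p (u - v) = S.phi p u - S.phi p v :=
  (S.lin_phi p hp).map_sub u v

lemma phi_neg (hp : p ∈ s) (u : V) : S.phi p (-u) = -S.phi p u := (S.lin_phi p hp).map_neg u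

lemma phi_zero (hp : p ∈ s) : S.phi p 0 = 0 := (S.lin_phi p hp).map_zero

lemma g_comm (hp : p ∈ s) (u v : V) : S.g p u v = S.g p v u := S.metric.2.1 p hp u v

lemma isLinearMap_g_left (hp : p ∈ s) (w : V) : IsLinearMap ℝ (fun u => S.g p u w) :=
  S.metric.2.2.1 p hp w

lemma g_add_left (hp : p ∈ s) (u v w : V) : S.g p (u + v) w = S.g p u w + S.g p v w :=
  (S.isLinearMap_g_left hp w).map_add u v

lemma g_smul_left (hp : p ∈ s) (c : ℝ) (u w : V) : S.g p (c • u) w = c * S.g p u w :=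
  (S.isLinearMap_g_left hp w).map_smul c u

lemma g_sub_left (hp : p ∈ s) (u v w : V) : S.g p (u - v) w = S.g p u w - S.g p v w :=
  (S.isLinearMap_g_left hp w).map_sub u v

lemma g_neg_left (hp : p ∈ s) (u w : V) : S.g p (-u) w = -S.g p u w :=
  (S.isLinearMap_g_left hp w).map_neg u

lemma g_zero_left (hp : p ∈ s) (w : V) : S.g p 0 w = 0 := (S.isLinearMap_g_left hp w).map_zero

lemma isLinearMap_g_right (hp : p ∈ s) (u : V) : IsLinearMap ℝ (S.g p u) := by
  have h : (fun v => S.g p v u) = S.g p u := funext fun v => S.g_comm hp v u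
  exact h ▸ S.isLinearMap_g_left hp u

lemma g_add_right (hp : p ∈ s) (u v w : V) : S.g p u (v + w) = S.g p u v + S.g p u w :=
  (S.isLinearMap_g_right hp u).map_add v w

lemma g_smul_right (hp : p ∈ s) (c : ℝ) (u w : V) : S.g p u (c • w) = c * S.g p u w :=
  (S.isLinearMap_g_right hp u).map_smul c w

lemma g_sub_right (hp : p ∈ s) (u v w : V) : S.g p u (v - w) = S.g p u v - S.g p u w :=
  (S.isLinearMap_g_right hp u).map_sub v w

lemma g_neg_right (hp : p ∈ s) (u w : V) : S.g p u (-w) = -S.g p u w :=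
  (S.isLinearMap_g_right hp u).map_neg w

lemma g_zero_right (hp : p ∈ s) (u : V) : S.g p u 0 = 0 := (S.isLinearMap_g_right hp u).map_zero

lemma eq_zero_of_forall_g_eq_zero (hp : p ∈ s) {x : V} (h : ∀ w, S.g p x w = 0) : x = 0 := by
  by_contra hx
  simpa [h x] using S.metric.2.2.2 p hp x hx

lemma phi_xi (hp : p ∈ s) : S.phi p (S.xi p) = 0 := by
  set k := S.phi p (S.xi p)
  set c := S.eta p k
  have hφk : S.phi p k = 0 := by
    rw [S.phi_sq p hp, S.eta_xi p hp, one_smul, neg_add_cancel]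
  have hk : k = c • S.xi p := by
    have h := S.phi_sq p hp k
    rw [hφk, S.phi_zero hp] at h
    linear_combination (norm := module) h
  -- With `k = c ξ`, compatibility at `(ξ, ξ)` and at `(k, k)` gives
  -- `c² g(ξ,ξ) = g(ξ,ξ) - 1` and `c² g(ξ,ξ) = c²`, whence `c⁴ = 0`.
  have e1 : S.g p k k = S.g p (S.xi p) (S.xi p) - 1 := by
    simpa [S.eta_xi p hp] using S.compat p hp (S.xi p) (S.xi p)
  have e2 : S.g p k k = c * c := by
    have h := S.compat p hp k k
    rw [hφk, S.g_zero_left hp] at h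
    linarith
  have e3 : S.g p k k = c * c * S.g p (S.xi p) (S.xi p) := by
    rw [hk, S.g_smul_left hp, S.g_smul_right hp]; ring
  have hc : c = 0 := pow_eq_zero_iff (n := 4) (by norm_num) |>.mp <| by
    linear_combination (c * c) * e1 + (1 - c * c) * e2 - e3
  rw [hk, hc, zero_smul]

lemma eta_phi (hp : p ∈ s) (u : V) : S.eta p (S.phi p u) = 0 := by
  have h : S.phi p (S.phi p (S.phi p u)) = -S.phi p u + S.eta p (S.phi p u) • S.xi p :=
    S.phi_sq p hp (S.phi p u)
  rw [S.phi_sq p hp u, S.phi_add hp, S.phi_neg hp, S.phi_smul hp, S.phi_xi hp, smul_zero,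
    add_zero, left_eq_add] at h
  simpa [S.eta_smul hp, S.eta_xi p hp, S.eta_zero hp] using congrArg (S.eta p) h

lemma g_xi_right (hp : p ∈ s) (u : V) : S.g p u (S.xi p) = S.eta p u := by
  have h := S.compat p hp u (S.xi p)
  rw [S.phi_xi hp, S.g_zero_right hp, S.eta_xi p hp, mul_one] at h
  linarith

lemma g_xi_left (hp : p ∈ s) (u : V) : S.g p (S.xi p) u = S.eta p u := by
  rw [S.g_comm hp, S.g_xi_right hp]

lemma g_phi_right (hp : p ∈ s) (u v : V) : S.g p u (S.phi p v) = -S.g p (S.phi p u) v := by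
  have h := S.compat p hp u (S.phi p v)
  rw [S.eta_phi hp, mul_zero, sub_zero, S.phi_sq p hp v, S.g_add_right hp, S.g_neg_right hp,
    S.g_smul_right hp, S.g_xi_right hp, S.eta_phi hp, mul_zero, add_zero] at h
  linarith

lemma eq_neg_phi_sq_add (hp : p ∈ s) (u : V) :
    u = -S.phi p (S.phi p u) + S.eta p u • S.xi p := by
  rw [S.phi_sq p hp]; abel

end ACM

namespace ACM

open Filter Topology

variable {s : Set V} (S : ACM s) {p : V}

lemma isC1LinearField_phi : IsC1LinearFieldOn s S.phi :=
  ⟨fun a => (S.smooth_phi a).of_le (by exact_mod_cast le_top), S.lin_phi⟩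

lemma isC1LinearField_eta : IsC1LinearFieldOn s S.eta :=
  ⟨fun a => (S.smooth_eta a).of_le (by exact_mod_cast le_top), S.lin_eta⟩

lemma isC1LinearField_g (a : V) : IsC1LinearFieldOn s (fun q => S.g q a) :=
  ⟨fun b => (S.metric.1 a b).of_le (by exact_mod_cast le_top),
    fun _ hq => S.isLinearMap_g_right hq a⟩

lemma differentiableAt_xi (hs : IsOpen s) (hp : p ∈ s) : DifferentiableAt ℝ S.xi p :=
  (S.smooth_xi.differentiableOn (by simp)).differentiableAt (hs.mem_nhds hp)

lemma differentiableAt_phi_apply (hs : IsOpen s) (hp : p ∈ s) (a : V) :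
    DifferentiableAt ℝ (fun q => S.phi q a) p :=
  S.isC1LinearField_phi.differentiableAt_apply hs hp a

lemma fderiv_g_comm (hs : IsOpen s) (hp : p ∈ s) (a b : V) :
    fderiv ℝ (fun q => S.g q a b) p = fderiv ℝ (fun q => S.g q b a) p :=
  EventuallyEq.fderiv_eq (eventually_of_mem (hs.mem_nhds hp) fun _ hq => S.g_comm hq a b)

variable [FiniteDimensional ℝ V]

lemma fderiv_phi_apply_xi (hs : IsOpen s) (hp : p ∈ s) (x : V) :
    fderiv ℝ (fun q => S.phi q (S.xi p)) p x = -S.phi p (fderiv ℝ S.xi p x) :=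
  S.isC1LinearField_phi.fderiv_apply_eq_neg_of_eventuallyConst hs hp (S.differentiableAt_xi hs hp)
    (eventually_of_mem (hs.mem_nhds hp) fun _ hq => S.phi_xi hq) x

lemma fderiv_eta_apply_xi (hs : IsOpen s) (hp : p ∈ s) (x : V) :
    fderiv ℝ (fun q => S.eta q (S.xi p)) p x = -S.eta p (fderiv ℝ S.xi p x) :=
  S.isC1LinearField_eta.fderiv_apply_eq_neg_of_eventuallyConst hs hp (S.differentiableAt_xi hs hp)
    (eventually_of_mem (hs.mem_nhds hp) fun q hq => S.eta_xi q hq) x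

lemma fderiv_eta_apply_phi (hs : IsOpen s) (hp : p ∈ s) (a x : V) :
    fderiv ℝ (fun q => S.eta q (S.phi p a)) p x
      = -S.eta p (fderiv ℝ (fun q => S.phi q a) p x) :=
  S.isC1LinearField_eta.fderiv_apply_eq_neg_of_eventuallyConst hs hp
    (S.differentiableAt_phi_apply hs hp a)
    (eventually_of_mem (hs.mem_nhds hp) fun _ hq => S.eta_phi hq a) x

lemma fderiv_phi_apply_phi (hs : IsOpen s) (hp : p ∈ s) (a x : V) :
    fderiv ℝ (fun q => S.phi q (S.phi p a)) p x
      = fderiv ℝ (fun q => S.eta q a) p x • S.xi p + S.eta p a • fderiv ℝ S.xi p x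
        - S.phi p (fderiv ℝ (fun q => S.phi q a) p x) := by
  have hsq : (fun q => S.phi q (S.phi q a)) =ᶠ[𝓝 p] fun q => -a + S.eta q a • S.xi q :=
    eventually_of_mem (hs.mem_nhds hp) fun q hq => S.phi_sq q hq a
  have h := S.isC1LinearField_phi.fderiv_apply hs hp (S.differentiableAt_phi_apply hs hp a) x
  rw [hsq.fderiv_eq, fderiv_const_add, fderiv_fun_smul
    (S.isC1LinearField_eta.differentiableAt_apply hs hp a) (S.differentiableAt_xi hs hp)] at h
  simp only [add_apply, smul_apply, ContinuousLinearMap.smulRight_apply] at h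
  rw [eq_sub_iff_add_eq, ← h, add_comm]

lemma fderiv_g_apply_xi (hs : IsOpen s) (hp : p ∈ s) (a x : V) :
    fderiv ℝ (fun q => S.g q a (S.xi p)) p x
      = fderiv ℝ (fun q => S.eta q a) p x - S.g p a (fderiv ℝ S.xi p x) := by
  have hξ : (fun q => S.g q a (S.xi q)) =ᶠ[𝓝 p] fun q => S.eta q a :=
    eventually_of_mem (hs.mem_nhds hp) fun _ hq => S.g_xi_right hq a
  have h := (S.isC1LinearField_g a).fderiv_apply hs hp (S.differentiableAt_xi hs hp) x
  rw [hξ.fderiv_eq] at h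
  rw [h, add_sub_cancel_right]

lemma fderiv_g_apply_phi (hs : IsOpen s) (hp : p ∈ s) (a b x : V) :
    fderiv ℝ (fun q => S.g q a (S.phi q b)) p x
      = fderiv ℝ (fun q => S.g q a (S.phi p b)) p x
        + S.g p a (fderiv ℝ (fun q => S.phi q b) p x) :=
  (S.isC1LinearField_g a).fderiv_apply hs hp (S.differentiableAt_phi_apply hs hp b) x

end ACM

lemma nijPhi_antisymm (phi : V → V → V) (p u v : V) : nijPhi phi p u v = -nijPhi phi p v u := by
  simp only [nijPhi]; abel

lemma nijPhi_self (phi : V → V → V) (p u : V) : nijPhi phi p u u = 0 := by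
  simp [nijPhi]

namespace ACM

variable {s : Set V} (S : ACM s) {p : V}

def EtaClosed : Prop := ∀ p ∈ s, ∀ u v : V, dEta S.eta p u v = 0

variable {S}

lemma EtaClosed.fderiv_eta_comm (hη : S.EtaClosed) (hp : p ∈ s) (u v : V) :
    fderiv ℝ (fun q => S.eta q v) p u = fderiv ℝ (fun q => S.eta q u) p v :=
  sub_eq_zero.1 (hη p hp u v)

variable (S) [FiniteDimensional ℝ V]

lemma nijPhi_add_right (hs : IsOpen s) (hp : p ∈ s) (u a b : V) :
    nijPhi S.phi p u (a + b) = nijPhi S.phi p u a + nijPhi S.phi p u b := by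
  simp only [nijPhi, S.isC1LinearField_phi.fderiv_apply_add hs hp, S.phi_add hp, map_add,
    add_apply]
  abel

lemma nijPhi_smul_right (hs : IsOpen s) (hp : p ∈ s) (c : ℝ) (u a : V) :
    nijPhi S.phi p u (c • a) = c • nijPhi S.phi p u a := by
  simp only [nijPhi, S.isC1LinearField_phi.fderiv_apply_smul hs hp, S.phi_smul hp, map_smul,
    smul_apply]
  module

lemma nijPhi_add_left (hs : IsOpen s) (hp : p ∈ s) (a b v : V) :
    nijPhi S.phi p (a + b) v = nijPhi S.phi p a v + nijPhi S.phi p b v := by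
  rw [nijPhi_antisymm, S.nijPhi_add_right hs hp, nijPhi_antisymm _ _ a, nijPhi_antisymm _ _ b]
  abel

lemma nijPhi_smul_left (hs : IsOpen s) (hp : p ∈ s) (c : ℝ) (a v : V) :
    nijPhi S.phi p (c • a) v = c • nijPhi S.phi p a v := by
  rw [nijPhi_antisymm, S.nijPhi_smul_right hs hp, nijPhi_antisymm _ _ a, smul_neg]

lemma nijPhi_xi (hs : IsOpen s) (hp : p ∈ s) (u : V) :
    nijPhi S.phi p u (S.xi p) = S.phi p (lieXiPhi S.phi S.xi p u) := by
  simp only [nijPhi, lieXiPhi]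
  rw [S.phi_xi hp, map_zero, S.fderiv_phi_apply_xi hs hp, S.fderiv_phi_apply_xi hs hp,
    S.phi_neg hp, S.phi_add hp, S.phi_sub hp]
  abel

variable {S}

lemma EtaClosed.lieXiPhi_phi (hη : S.EtaClosed) (hs : IsOpen s) (hp : p ∈ s) (u : V) :
    lieXiPhi S.phi S.xi p (S.phi p u) = -S.phi p (lieXiPhi S.phi S.xi p u) := by
  have hξη : fderiv ℝ (fun q => S.eta q u) p (S.xi p) = -S.eta p (fderiv ℝ S.xi p u) := by
    rw [hη.fderiv_eta_comm hp, S.fderiv_eta_apply_xi hs hp]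
  simp only [lieXiPhi]
  rw [S.fderiv_phi_apply_phi hs hp, S.phi_sq p hp u, map_add, map_neg, map_smul, S.phi_add hp,
    S.phi_sub hp, S.phi_sq p hp (fderiv ℝ S.xi p u), hξη]
  module

lemma EtaClosed.hpr_eq_neg_smul_nijPhi_xi (hη : S.EtaClosed) (hs : IsOpen s) (hp : p ∈ s)
    (α : ℝ) (u : V) :
    hpr α S.phi S.xi p u = -((1 / (2 * α)) • nijPhi S.phi p u (S.xi p)) := by
  rw [hpr, hη.lieXiPhi_phi hs hp, S.nijPhi_xi hs hp, smul_neg]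

lemma EtaClosed.eta_lieXiPhi (hη : S.EtaClosed) (hs : IsOpen s) (hp : p ∈ s) (u : V) :
    S.eta p (lieXiPhi S.phi S.xi p u) = 0 := by
  have h₁ := S.fderiv_eta_apply_phi hs hp u (S.xi p)
  have h₂ := S.fderiv_eta_apply_xi hs hp (S.phi p u)
  have h₃ := hη.fderiv_eta_comm hp (S.xi p) (S.phi p u)
  simp only [lieXiPhi]
  rw [S.eta_add hp, S.eta_sub hp, S.eta_phi hp]
  linarith

lemma EtaClosed.eta_nijPhi (hη : S.EtaClosed) (hs : IsOpen s) (hp : p ∈ s) (u v : V) :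
    S.eta p (nijPhi S.phi p u v) = 0 := by
  have h₁ := S.fderiv_eta_apply_phi hs hp v (S.phi p u)
  have h₂ := S.fderiv_eta_apply_phi hs hp u (S.phi p v)
  have h₃ := hη.fderiv_eta_comm hp (S.phi p u) (S.phi p v)
  simp only [nijPhi]
  rw [S.eta_sub hp, S.eta_add hp, S.eta_sub hp, S.eta_phi hp, S.eta_phi hp]
  linarith

/-- For `u ∈ ker η` the vector `N(φu, u)` is a multiple of `ξ`, and `η ∘ N = 0` kills it. -/
lemma EtaClosed.nijPhi_phi_self (hη : S.EtaClosed) (hs : IsOpen s) (hp : p ∈ s) {u : V}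
    (hu : S.eta p u = 0) : nijPhi S.phi p (S.phi p u) u = 0 := by
  set r := fderiv ℝ (fun q => S.eta q u) p (S.phi p u)
    + S.eta p (fderiv ℝ (fun q => S.phi q u) p u)
  have hφφ : S.phi p (S.phi p u) = -u := by rw [S.phi_sq p hp u, hu, zero_smul, add_zero]
  have hD : ∀ x, fderiv ℝ (fun q => S.phi q (S.phi p u)) p x
      = fderiv ℝ (fun q => S.eta q u) p x • S.xi p
        - S.phi p (fderiv ℝ (fun q => S.phi q u) p x) := by
    intro x
    rw [S.fderiv_phi_apply_phi hs hp, hu, zero_smul, add_zero]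
  have hN : nijPhi S.phi p (S.phi p u) u = -(r • S.xi p) := by
    simp only [nijPhi]
    rw [hφφ, map_neg, hD, hD, S.phi_sub hp, S.phi_smul hp, S.phi_xi hp, smul_zero,
      S.phi_sq p hp]
    module
  have hr := hη.eta_nijPhi hs hp (S.phi p u) u
  rw [hN, S.eta_neg hp, S.eta_smul hp, S.eta_xi p hp, mul_one, neg_eq_zero] at hr
  rw [hN, hr, zero_smul, neg_zero]

end ACM

lemma IsLeviCivitaOn.koszul {s : Set V} {g : V → V → V → ℝ} {Γ : V → V → V → V}
    (hΓ : IsLeviCivitaOn s g Γ) (hg : IsMetricOn s g) {p : V} (hp : p ∈ s) (u v w : V) :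
    2 * g p (Γ p u v) w
      = fderiv ℝ (fun q => g q v w) p u + fderiv ℝ (fun q => g q u w) p v
        - fderiv ℝ (fun q => g q u v) p w := by
  have e₁ := hΓ.2.2 p hp u v w
  have e₂ := hΓ.2.2 p hp v u w
  have e₃ := hΓ.2.2 p hp w u v
  rw [hΓ.2.1 p hp v u] at e₂
  rw [hΓ.2.1 p hp w u, hΓ.2.1 p hp w v] at e₃
  have s₁ := hg.2.1 p hp v (Γ p u w)
  have s₂ := hg.2.1 p hp (Γ p u v) w
  linarith

namespace ACM

variable {s : Set V} (S : ACM s) {p : V}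

lemma eq_of_g_xi_eq_of_g_phi_eq (hp : p ∈ s) {x y : V} (hξ : S.g p x (S.xi p) = S.g p y (S.xi p))
    (hφ : ∀ z, S.g p x (S.phi p z) = S.g p y (S.phi p z)) : x = y := by
  refine sub_eq_zero.1 (S.eq_zero_of_forall_g_eq_zero hp fun w => ?_)
  rw [S.g_sub_left hp, S.eq_neg_phi_sq_add hp w, S.g_add_right hp, S.g_add_right hp,
    S.g_neg_right hp, S.g_neg_right hp, S.g_smul_right hp, S.g_smul_right hp, hξ, hφ]
  ring

variable [FiniteDimensional ℝ V]

lemma fderiv_g_xi_apply_phi (hs : IsOpen s) (hp : p ∈ s) (a x : V) :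
    fderiv ℝ (fun q => S.g q (S.xi p) (S.phi q a)) p x
      = -S.g p (fderiv ℝ S.xi p x) (S.phi p a) := by
  have h₁ := S.fderiv_eta_apply_phi hs hp a x
  have h₂ := S.fderiv_g_apply_xi hs hp (S.phi p a) x
  rw [S.fderiv_g_apply_phi hs hp, S.g_xi_left hp, S.fderiv_g_comm hs hp, h₂,
    S.g_comm hp (S.phi p a)]
  linarith

variable {S} {Γ : V → V → V → V}

lemma EtaClosed.two_mul_g_cov_xi (hη : S.EtaClosed) (hs : IsOpen s)
    (hΓ : IsLeviCivitaOn s S.g Γ) (hp : p ∈ s) (u w : V) :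
    2 * S.g p (cov Γ S.xi p u) w
      = S.g p (fderiv ℝ S.xi p u) w + S.g p u (fderiv ℝ S.xi p w)
        + fderiv ℝ (fun q => S.g q u w) p (S.xi p) := by
  have hk := hΓ.koszul S.metric hp u (S.xi p) w
  have h₁ := S.fderiv_g_apply_xi hs hp w u
  have h₂ := S.fderiv_g_apply_xi hs hp u w
  have h₃ := hη.fderiv_eta_comm hp u w
  rw [S.fderiv_g_comm hs hp (S.xi p) w] at hk
  rw [cov, S.g_add_left hp, S.g_comm hp w] at *
  linarith

lemma EtaClosed.g_cov_xi_xi (hη : S.EtaClosed) (hs : IsOpen s) (hΓ : IsLeviCivitaOn s S.g Γ)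
    (hp : p ∈ s) (u : V) : S.g p (cov Γ S.xi p u) (S.xi p) = 0 := by
  have h := hη.two_mul_g_cov_xi hs hΓ hp u (S.xi p)
  have h₁ := S.fderiv_g_apply_xi hs hp u (S.xi p)
  have h₂ := hη.fderiv_eta_comm hp (S.xi p) u
  have h₃ := S.fderiv_eta_apply_xi hs hp u
  simp only [S.g_xi_right hp] at h ⊢
  linarith

lemma EtaClosed.g_cov_xi_comm (hη : S.EtaClosed) (hs : IsOpen s) (hΓ : IsLeviCivitaOn s S.g Γ)
    (hp : p ∈ s) (u w : V) : S.g p (cov Γ S.xi p u) w = S.g p (cov Γ S.xi p w) u := by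
  have h₁ := hη.two_mul_g_cov_xi hs hΓ hp u w
  have h₂ := hη.two_mul_g_cov_xi hs hΓ hp w u
  rw [S.fderiv_g_comm hs hp w u, S.g_comm hp w, S.g_comm hp (fderiv ℝ S.xi p w) u] at h₂
  linarith

end ACM

namespace IsAK

variable {s : Set V} {S : ACM s} {α : ℝ} {p : V} {Γ : V → V → V → V}

lemma etaClosed (hAK : IsAK s S α) : S.EtaClosed := hAK.deta

variable [FiniteDimensional ℝ V]

lemma fderiv_g_apply_phi_xi (hAK : IsAK s S α) (hs : IsOpen s) (hp : p ∈ s) (v w : V) :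
    fderiv ℝ (fun q => S.g q v (S.phi q w)) p (S.xi p)
      = 2 * α * S.g p v (S.phi p w) - S.g p (fderiv ℝ S.xi p v) (S.phi p w)
        + S.g p (fderiv ℝ S.xi p w) (S.phi p v) := by
  have h := hAK.dphi p hp (S.xi p) v w
  simp only [FPhi] at h
  rw [S.eta_xi p hp, S.g_xi_left hp, S.g_xi_left hp, S.eta_phi hp, S.eta_phi hp,
    S.fderiv_g_xi_apply_phi hs hp, S.fderiv_g_xi_apply_phi hs hp] at h
  linarith

lemma two_mul_g_cov_xi_phi (hAK : IsAK s S α) (hs : IsOpen s) (hΓ : IsLeviCivitaOn s S.g Γ)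
    (hp : p ∈ s) (u z : V) :
    2 * S.g p (cov Γ S.xi p u) (S.phi p z)
      = 2 * α * S.g p u (S.phi p z) - S.g p u (lieXiPhi S.phi S.xi p z) := by
  have h := hAK.etaClosed.two_mul_g_cov_xi hs hΓ hp u (S.phi p z)
  have h₁ := S.fderiv_g_apply_phi hs hp u z (S.xi p)
  have h₂ := hAK.fderiv_g_apply_phi_xi hs hp u z
  have h₃ := S.g_phi_right hp (fderiv ℝ S.xi p z) u
  rw [lieXiPhi, S.g_add_right hp, S.g_sub_right hp, S.g_comm hp (S.phi p _) u] at *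
  linarith

/-- Compare `g(∇_u ξ, φz)` with `g(∇_{φz} ξ, u)` via the symmetry of `∇ξ`. -/
lemma g_lieXiPhi_comm (hAK : IsAK s S α) (hs : IsOpen s) (hΓ : IsLeviCivitaOn s S.g Γ)
    (hp : p ∈ s) (u z : V) :
    S.g p u (lieXiPhi S.phi S.xi p z) = S.g p z (lieXiPhi S.phi S.xi p u) := by
  have hη := hAK.etaClosed
  have h₁ := hAK.two_mul_g_cov_xi_phi hs hΓ hp u z
  have h₂ := hAK.two_mul_g_cov_xi_phi hs hΓ hp (S.phi p z) (S.phi p u)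
  have h₃ := hη.g_cov_xi_comm hs hΓ hp u (S.phi p z)
  have h₄ : S.g p (cov Γ S.xi p (S.phi p z)) u
      = -S.g p (cov Γ S.xi p (S.phi p z)) (S.phi p (S.phi p u)) := by
    conv_lhs => rw [S.eq_neg_phi_sq_add hp u]
    rw [S.g_add_right hp, S.g_neg_right hp, S.g_smul_right hp, hη.g_cov_xi_xi hs hΓ hp, mul_zero,
      add_zero]
  have h₅ : S.g p (S.phi p z) (S.phi p (S.phi p u)) = S.g p z (S.phi p u) := by
    rw [S.compat p hp, S.eta_phi hp, mul_zero, sub_zero]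
  have h₆ : S.g p (S.phi p z) (lieXiPhi S.phi S.xi p (S.phi p u))
      = -S.g p z (lieXiPhi S.phi S.xi p u) := by
    rw [hη.lieXiPhi_phi hs hp, S.g_neg_right hp, S.compat p hp, hη.eta_lieXiPhi hs hp, mul_zero,
      sub_zero]
  have h₇ : S.g p u (S.phi p z) = -S.g p z (S.phi p u) := by
    rw [S.g_phi_right hp, S.g_comm hp (S.phi p u)]
  linear_combination h₁ - 2 * h₃ - 2 * h₄ + h₂ + 2 * α * h₅ - h₆ + 2 * α * h₇

lemma cov_xi (hAK : IsAK s S α) (hs : IsOpen s) (hΓ : IsLeviCivitaOn s S.g Γ) (hp : p ∈ s)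
    (u : V) :
    cov Γ S.xi p u = -(α • S.phi p (S.phi p u)) + α • hpr α S.phi S.xi p u := by
  have hη := hAK.etaClosed
  have hα : α ≠ 0 := hAK.pos.ne'
  refine S.eq_of_g_xi_eq_of_g_phi_eq hp ?_ fun z => ?_
  · rw [hη.g_cov_xi_xi hs hΓ hp, S.g_add_left hp, S.g_neg_left hp, S.g_smul_left hp,
      S.g_smul_left hp, S.g_xi_right hp, S.g_xi_right hp, S.eta_phi hp, hpr, S.eta_smul hp,
      hη.eta_lieXiPhi hs hp]
    ring
  · have h := hAK.two_mul_g_cov_xi_phi hs hΓ hp u z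
    have h₁ : S.g p (S.phi p (S.phi p u)) (S.phi p z) = -S.g p u (S.phi p z) := by
      rw [S.compat p hp, S.eta_phi hp, zero_mul, sub_zero, S.g_phi_right hp, neg_neg]
    have h₂ : S.g p (hpr α S.phi S.xi p u) (S.phi p z)
        = -(1 / (2 * α) * S.g p u (lieXiPhi S.phi S.xi p z)) := by
      rw [hpr, S.g_smul_left hp, hη.lieXiPhi_phi hs hp, S.g_neg_left hp, S.compat p hp,
        hη.eta_lieXiPhi hs hp, zero_mul, sub_zero, S.g_comm hp, hAK.g_lieXiPhi_comm hs hΓ hp z u]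
      ring
    rw [S.g_add_left hp, S.g_neg_left hp, S.g_smul_left hp, S.g_smul_left hp, h₁, h₂]
    field_simp
    linarith

end IsAK

namespace ACM

variable {s : Set V} (S : ACM s) {p : V}

lemma linearIndependent_self_phi_xi (hp : p ∈ s) {a : V} (ha : S.eta p a = 0) (ha₀ : a ≠ 0) :
    LinearIndependent ℝ ![a, S.phi p a, S.xi p] := by
  rw [Fintype.linearIndependent_iff]
  intro c hc
  simp only [Fin.sum_univ_three, Matrix.cons_val_zero, Matrix.cons_val_one,
    Matrix.cons_val_two, Matrix.head_cons, Matrix.tail_cons] at hc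
  have h₂ : c 2 = 0 := by
    simpa [S.eta_add hp, S.eta_smul hp, ha, S.eta_phi hp, S.eta_xi p hp, S.eta_zero hp]
      using congrArg (S.eta p) hc
  rw [h₂, zero_smul, add_zero] at hc
  have hφ := congrArg (S.phi p) hc
  rw [S.phi_add hp, S.phi_smul hp, S.phi_smul hp, S.phi_sq p hp, ha, zero_smul, add_zero,
    S.phi_zero hp] at hφ
  have hsq : (c 0 ^ 2 + c 1 ^ 2) • a = 0 := by
    linear_combination (norm := module) c 0 • hc - c 1 • hφ
  have hsum := (smul_eq_zero.1 hsq).resolve_right ha₀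
  have h₀ : c 0 = 0 := by nlinarith
  have h₁ : c 1 = 0 := by nlinarith
  intro i
  fin_cases i <;> assumption

lemma exists_eq_smul_add_smul_phi (h3 : Module.finrank ℝ V = 3) (hp : p ∈ s) {a b : V}
    (ha : S.eta p a = 0) (ha₀ : a ≠ 0) (hb : S.eta p b = 0) :
    ∃ c d : ℝ, b = c • a + d • S.phi p a := by
  have hspan := (S.linearIndependent_self_phi_xi hp ha ha₀).span_eq_top_of_card_eq_finrank
    (by simp [h3])
  obtain ⟨c, hc⟩ :=
    (Submodule.mem_span_range_iff_exists_fun ℝ).1 (hspan ▸ Submodule.mem_top : b ∈ _)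
  simp only [Fin.sum_univ_three, Matrix.cons_val_zero, Matrix.cons_val_one,
    Matrix.cons_val_two, Matrix.head_cons, Matrix.tail_cons] at hc
  have h₂ : c 2 = 0 := by
    simpa [S.eta_add hp, S.eta_smul hp, ha, S.eta_phi hp, S.eta_xi p hp, hb]
      using congrArg (S.eta p) hc
  exact ⟨c 0, c 1, by rw [← hc, h₂, zero_smul, add_zero]⟩

variable [FiniteDimensional ℝ V]

lemma nijPhi_eq_zero_of_crIntegrableOn (hs : IsOpen s) (hCR : CRIntegrableOn s S) (hp : p ∈ s)
    (hξ : ∀ w, nijPhi S.phi p w (S.xi p) = 0) (u v : V) : nijPhi S.phi p u v = 0 := by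
  have hD : ∀ w, S.eta p (w - S.eta p w • S.xi p) = 0 := fun w => by
    rw [S.eta_sub hp, S.eta_smul hp, S.eta_xi p hp, mul_one, sub_self]
  have hξ' : ∀ w, nijPhi S.phi p (S.xi p) w = 0 := fun w => by
    rw [nijPhi_antisymm, hξ, neg_zero]
  rw [← sub_add_cancel u (S.eta p u • S.xi p), ← sub_add_cancel v (S.eta p v • S.xi p),
    S.nijPhi_add_left hs hp, S.nijPhi_smul_left hs hp, hξ', S.nijPhi_add_right hs hp,
    S.nijPhi_smul_right hs hp, hξ, hCR p hp _ _ (hD u) (hD v)]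
  simp

variable {S}

lemma EtaClosed.crIntegrableOn_of_finrank_eq_three (hη : S.EtaClosed) (hs : IsOpen s)
    (h3 : Module.finrank ℝ V = 3) : CRIntegrableOn s S := by
  intro p hp a b ha hb
  rcases eq_or_ne a 0 with rfl | ha₀
  · simpa using S.nijPhi_smul_left hs hp 0 0 b
  obtain ⟨c, d, rfl⟩ := S.exists_eq_smul_add_smul_phi h3 hp ha ha₀ hb
  rw [S.nijPhi_add_right hs hp, S.nijPhi_smul_right hs hp, S.nijPhi_smul_right hs hp,
    nijPhi_self, nijPhi_antisymm, hη.nijPhi_phi_self hs hp ha]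
  simp

end ACM

namespace IsAK

variable [FiniteDimensional ℝ V] {s : Set V} {S : ACM s} {α : ℝ}

lemma hpr_eq_zero_of_isNormal (hAK : IsAK s S α) (hs : IsOpen s) (hN : IsNormal s S) :
    ∀ p ∈ s, ∀ u, hpr α S.phi S.xi p u = 0 := by
  intro p hp u
  have h := hN p hp u (S.xi p)
  rw [hAK.deta p hp, mul_zero, zero_smul, add_zero] at h
  rw [hAK.etaClosed.hpr_eq_neg_smul_nijPhi_xi hs hp, h, smul_zero, neg_zero]

lemma isNormal_of_hpr_eq_zero (hAK : IsAK s S α) (hs : IsOpen s) (hCR : CRIntegrableOn s S)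
    (h₀ : ∀ p ∈ s, ∀ u, hpr α S.phi S.xi p u = 0) : IsNormal s S := by
  intro p hp u v
  have hξ : ∀ w, nijPhi S.phi p w (S.xi p) = 0 := fun w => by
    have h := hAK.etaClosed.hpr_eq_neg_smul_nijPhi_xi hs hp α w
    rw [h₀ p hp w, eq_comm, neg_eq_zero, smul_eq_zero] at h
    exact h.resolve_left (by simpa using hAK.pos.ne')
  rw [hAK.deta p hp, mul_zero, zero_smul, add_zero,
    S.nijPhi_eq_zero_of_crIntegrableOn hs hCR hp hξ]

lemma isNormal_iff_hpr_eq_zero (hAK : IsAK s S α) (hs : IsOpen s) (hCR : CRIntegrableOn s S) :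
    IsNormal s S ↔ ∀ p ∈ s, ∀ u, hpr α S.phi S.xi p u = 0 :=
  ⟨hAK.hpr_eq_zero_of_isNormal hs, hAK.isNormal_of_hpr_eq_zero hs hCR⟩

lemma hpr_eq_zero_iff_cov_xi (hAK : IsAK s S α) (hs : IsOpen s) {Γ : V → V → V → V}
    (hΓ : IsLeviCivitaOn s S.g Γ) :
    (∀ p ∈ s, ∀ u, hpr α S.phi S.xi p u = 0)
      ↔ ∀ p ∈ s, ∀ u, cov Γ S.xi p u = -(α • S.phi p (S.phi p u)) := by
  refine forall₂_congr fun p hp => forall_congr' fun u => ?_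
  rw [hAK.cov_xi hs hΓ hp, add_eq_left, smul_eq_zero, or_iff_right hAK.pos.ne']

end IsAK

/-- with Kähler leaves of `D`, normality is equivalent to `h' = 0`,
equivalently `∇ξ = -α φ²`; in particular in dimension 3, `h' = 0` implies normality. -/
theorem stmt_2 (n : ℕ) (s : Set (E (2*n+1))) (hs : IsOpen s) (S : ACM s) (α : ℝ)
    (hAK : IsAK s S α) (hleaves : CRIntegrableOn s S)
    (Γ : E (2*n+1) → E (2*n+1) → E (2*n+1) → E (2*n+1))
    (hΓ : IsLeviCivitaOn s S.g Γ) :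
    (IsNormal s S ↔ (∀ p ∈ s, ∀ u : E (2*n+1), hpr α S.phi S.xi p u = 0)) ∧
    (IsNormal s S ↔ (∀ p ∈ s, ∀ u : E (2*n+1),
        cov Γ S.xi p u = -(α • S.phi p (S.phi p u)))) ∧
    (∀ s3 : Set (E 3), IsOpen s3 → ∀ S3 : ACM s3, IsAK s3 S3 α →
      (∀ p ∈ s3, ∀ u : E 3, hpr α S3.phi S3.xi p u = 0) → IsNormal s3 S3) := by
  have hnormal := hAK.isNormal_iff_hpr_eq_zero hs hleaves
  refine ⟨hnormal, hnormal.trans (hAK.hpr_eq_zero_iff_cov_xi hs hΓ), ?_⟩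
  intro s3 hs3 S3 hAK3 h₀
  have hCR := hAK3.etaClosed.crIntegrableOn_of_finrank_eq_three hs3 finrank_euclideanSpace_fin
  exact hAK3.isNormal_of_hpr_eq_zero hs3 hCR h₀

end AKG
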